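/- Let A be a Γ-graded ring, h ∈ GL_n(A)(α_1,...,α_n), and r ∈ A_λ an invertible homogeneous element. Then diag(h, r h⁻¹ r⁻¹) = [[I, h r⁻¹],[0, I]] · [[I, 0],[-r h⁻¹, I]] · [[I, h r⁻¹],[0, I]] · [[0, -r⁻¹ I],[r I, 0]], and hence diag(h, r h⁻¹ r⁻¹) ∈ E_{2n}(A)(α_1,...,α_n, λ+α_1,...,λ+α_n). -/

import Mathlib

/-!
For an invertible block `X` with inverse `Y`, the antidiagonal matrix `[[0, X], [-Y, 0]]` is the
product `[[1, X], [0, 1]] · [[1, 0], [-Y, 1]] · [[1, X], [0, 1]]`. With `s = r·I`, the matrix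
`diag(h, s h⁻¹ s⁻¹)` is the product of the antidiagonal matrices for `X = h s⁻¹` and `X = -s⁻¹`.
A block unitriangular matrix whose off-diagonal block has entries of the right degrees is the
sum of its single-entry parts, hence a product of graded elementary matrices. The degrees work
out because `r⁻¹` is homogeneous of degree `-λ`, and `h` and `h⁻¹` are homogeneous of type `α`.
-/

open Matrix

/-- The graded elementary group `E(A)(β)` for a family `β : ι → Γ`: the subgroup of
invertible matrices generated by the elementary matrices `e_{i,j}(a) = 1 + a·E_{ij}` with
`a ∈ A_{βᵢ - βⱼ}`, `i ≠ j`. -/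
def gradedElementary {Γ A : Type*} [AddCommGroup Γ] [Ring A] (𝒜 : Γ → AddSubgroup A)
    (ι : Type*) [DecidableEq ι] [Fintype ι] (β : ι → Γ) : Subgroup (Matrix ι ι A)ˣ :=
  Subgroup.closure {g : (Matrix ι ι A)ˣ | ∃ i j : ι, ∃ a : A, i ≠ j ∧ a ∈ 𝒜 (β i - β j) ∧
    g.val = 1 + Matrix.single i j a}

/-- Comparing degree-`0` parts of `u * u⁻¹ = 1` shows that `u` times the `(-γ)`-component of
`u⁻¹` is already `1`. -/
theorem Units.val_inv_mem_graded {Γ A : Type*} [AddCommGroup Γ] [DecidableEq Γ] [Ring A]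
    (𝒜 : Γ → AddSubgroup A) [GradedRing 𝒜] {γ : Γ} (u : Aˣ) (hu : (u : A) ∈ 𝒜 γ) :
    (↑u⁻¹ : A) ∈ 𝒜 (-γ) := by
  have hright : (u : A) * DirectSum.decompose 𝒜 (↑u⁻¹ : A) (-γ) = 1 := by
    rw [← DirectSum.coe_decompose_mul_add_of_left_mem 𝒜 hu, u.mul_inv]
    exact DirectSum.decompose_of_mem_same 𝒜 (add_neg_cancel γ ▸ SetLike.one_mem_graded 𝒜)
  have hcomp : (DirectSum.decompose 𝒜 (↑u⁻¹ : A) (-γ) : A) = ↑u⁻¹ := by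
    simpa using u.eq_inv_mul_iff_mul_eq.mpr hright
  exact hcomp ▸ SetLike.coe_mem _

namespace Matrix

variable {Γ A : Type*} [AddCommGroup Γ] [Ring A] {𝒜 : Γ → AddSubgroup A}
  {m n p : Type*}

/-- `GLₙ(A)(α)` consists of the invertible matrices graded of type `(α, α)`. -/
def IsGraded (𝒜 : Γ → AddSubgroup A) (a : m → Γ) (b : n → Γ) (M : Matrix m n A) : Prop :=
  ∀ i j, M i j ∈ 𝒜 (a i - b j)

variable {a : m → Γ} {b : n → Γ} {c : p → Γ}

theorem IsGraded.neg {M : Matrix m n A} (hM : IsGraded 𝒜 a b M) : IsGraded 𝒜 a b (-M) :=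
  fun i j => neg_mem (hM i j)

theorem IsGraded.mul [Fintype n] [SetLike.GradedMul 𝒜] {M : Matrix m n A} {N : Matrix n p A}
    (hM : IsGraded 𝒜 a b M) (hN : IsGraded 𝒜 b c N) : IsGraded 𝒜 a c (M * N) := fun i j =>
  sum_mem fun k _ => sub_add_sub_cancel (a i) (b k) (c j) ▸
    SetLike.mul_mem_graded (hM i k) (hN k j)

theorem isGraded_smul_one [DecidableEq m] {a b : m → Γ} {γ : Γ} {r : A} (hr : r ∈ 𝒜 γ)
    (hab : ∀ i, a i - b i = γ) : IsGraded 𝒜 a b (r • (1 : Matrix m m A)) := by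
  intro i j
  rcases eq_or_ne i j with rfl | hij
  · simpa [hab] using hr
  · simp [hij]

theorem IsGraded.apply_mem_of_single [DecidableEq m] [DecidableEq n] [Fintype m] [Fintype n]
    {R : Type*} [Monoid R] {S : Submonoid R} {F : Matrix m n A → R} (map_zero : F 0 = 1)
    (map_add : ∀ N N', F (N + N') = F N * F N')
    (map_single : ∀ i j r, r ∈ 𝒜 (a i - b j) → F (single i j r) ∈ S)
    {M : Matrix m n A} (hM : IsGraded 𝒜 a b M) : F M ∈ S := by
  rw [matrix_eq_sum_single M]
  refine Finset.sum_induction _ (F · ∈ S) (fun N N' hN hN' => ?_) (map_zero ▸ S.one_mem)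
    fun i _ => Finset.sum_induction _ (F · ∈ S) (fun N N' hN hN' => ?_) (map_zero ▸ S.one_mem)
      fun j _ => map_single i j _ (hM i j)
  all_goals exact map_add N N' ▸ S.mul_mem hN hN'

end Matrix

section Elementary

variable {Γ A : Type*} [AddCommGroup Γ] [Ring A] (𝒜 : Γ → AddSubgroup A)
  {ι : Type*} [DecidableEq ι] [Fintype ι] (β : ι → Γ)

def gradedElementaryMatrices : Submonoid (Matrix ι ι A) :=
  (gradedElementary 𝒜 ι β).toSubmonoid.map (Units.coeHom _)

variable {𝒜 β}

theorem mem_gradedElementaryMatrices {M : Matrix ι ι A} :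
    M ∈ gradedElementaryMatrices 𝒜 β ↔ ∃ e ∈ gradedElementary 𝒜 ι β, e.val = M :=
  Submonoid.mem_map

theorem one_add_single_mem_gradedElementaryMatrices {i j : ι} (hij : i ≠ j) {a : A}
    (ha : a ∈ 𝒜 (β i - β j)) : 1 + single i j a ∈ gradedElementaryMatrices 𝒜 β := by
  have hunit : IsUnit (1 + single i j a) :=
    IsNilpotent.isUnit_one_add ⟨2, by simp [sq, hij.symm]⟩
  exact mem_gradedElementaryMatrices.mpr
    ⟨hunit.unit, Subgroup.subset_closure ⟨i, j, a, hij, ha, rfl⟩, rfl⟩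

end Elementary

section Blocks

variable {Γ A : Type*} [AddCommGroup Γ] [Ring A] {𝒜 : Γ → AddSubgroup A}
  {m n : Type*} [DecidableEq m] [DecidableEq n] [Fintype m] [Fintype n] {β : m ⊕ n → Γ}

theorem fromBlocks_upper_mem_gradedElementaryMatrices {M : Matrix m n A}
    (hM : M.IsGraded 𝒜 (fun i => β (.inl i)) (fun j => β (.inr j))) :
    fromBlocks 1 M 0 1 ∈ gradedElementaryMatrices 𝒜 β := by
  refine hM.apply_mem_of_single (F := fun N => fromBlocks 1 N 0 1) fromBlocks_one
    (fun N N' => by simp [fromBlocks_multiply, add_comm]) fun i j r hr => ?_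
  convert one_add_single_mem_gradedElementaryMatrices Sum.inl_ne_inr hr using 1
  ext (i' | i') (j' | j') <;> simp [single_apply, one_apply]

theorem fromBlocks_lower_mem_gradedElementaryMatrices {M : Matrix n m A}
    (hM : M.IsGraded 𝒜 (fun i => β (.inr i)) (fun j => β (.inl j))) :
    fromBlocks 1 0 M 1 ∈ gradedElementaryMatrices 𝒜 β := by
  refine hM.apply_mem_of_single (F := fun N => fromBlocks 1 0 N 1) fromBlocks_one
    (fun N N' => by simp [fromBlocks_multiply]) fun i j r hr => ?_
  convert one_add_single_mem_gradedElementaryMatrices Sum.inr_ne_inl hr using 1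
  ext (i' | i') (j' | j') <;> simp [single_apply, one_apply]

theorem fromBlocks_antidiag_eq_mul {X : Matrix m n A} {Y : Matrix n m A} (hXY : X * Y = 1)
    (hYX : Y * X = 1) :
    fromBlocks 0 X (-Y) 0 = fromBlocks 1 X 0 1 * fromBlocks 1 0 (-Y) 1 * fromBlocks 1 X 0 1 := by
  simp [fromBlocks_multiply, hXY, hYX]

theorem fromBlocks_antidiag_mem_gradedElementaryMatrices {X : Matrix m n A} {Y : Matrix n m A}
    (hXY : X * Y = 1) (hYX : Y * X = 1)
    (hX : X.IsGraded 𝒜 (fun i => β (.inl i)) (fun j => β (.inr j)))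
    (hY : Y.IsGraded 𝒜 (fun i => β (.inr i)) (fun j => β (.inl j))) :
    fromBlocks 0 X (-Y) 0 ∈ gradedElementaryMatrices 𝒜 β := by
  rw [fromBlocks_antidiag_eq_mul hXY hYX]
  exact mul_mem (mul_mem (fromBlocks_upper_mem_gradedElementaryMatrices hX)
    (fromBlocks_lower_mem_gradedElementaryMatrices hY.neg))
    (fromBlocks_upper_mem_gradedElementaryMatrices hX)

theorem fromBlocks_diag_eq_antidiag_mul_antidiag {g g' s s' : Matrix n n A} (hs : s' * s = 1) :
    fromBlocks g 0 0 (s * g' * s') =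
      fromBlocks 0 (g * s') (-(s * g')) 0 * fromBlocks 0 (-s') s 0 := by
  simp [fromBlocks_multiply, Matrix.mul_assoc, hs]

end Blocks

/-- Let `A` be a `Γ`-graded ring, `h ∈ GLₙ(A)(α₁,…,αₙ)` and `r ∈ A_λ` an invertible
homogeneous element.  Then
`diag(h, r h⁻¹ r⁻¹) = [[I, h r⁻¹],[0, I]] · [[I, 0],[-r h⁻¹, I]] · [[I, h r⁻¹],[0, I]] ·
[[0, -r⁻¹I],[rI, 0]]`, and hence `diag(h, r h⁻¹ r⁻¹) ∈ E_{2n}(A)(α₁,…,αₙ,λ+α₁,…,λ+αₙ)`. -/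
theorem diag_h_conj_in_elementary {Γ A : Type*} [AddCommGroup Γ] [DecidableEq Γ]
    [Ring A] (𝒜 : Γ → AddSubgroup A) [GradedRing 𝒜] {n : ℕ} (α : Fin n → Γ)
    (h : (Matrix (Fin n) (Fin n) A)ˣ)
    (hh : ∀ i j : Fin n, h.val i j ∈ 𝒜 (α i - α j))
    (hh' : ∀ i j : Fin n, (h⁻¹).val i j ∈ 𝒜 (α i - α j))
    (lam : Γ) (u : Aˣ) (hu : (u : A) ∈ 𝒜 lam) :
    fromBlocks (h.val) 0 0 (((↑u : A) • 1) * (h⁻¹).val * ((↑u⁻¹ : A) • 1)) =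
        (fromBlocks (1 : Matrix (Fin n) (Fin n) A) (h.val * ((↑u⁻¹ : A) • 1)) 0 1 :
            Matrix (Fin n ⊕ Fin n) (Fin n ⊕ Fin n) A) *
          (fromBlocks 1 0 (-(((↑u : A) • 1) * (h⁻¹).val)) 1 :
            Matrix (Fin n ⊕ Fin n) (Fin n ⊕ Fin n) A) *
          (fromBlocks 1 (h.val * ((↑u⁻¹ : A) • 1)) 0 1 :
            Matrix (Fin n ⊕ Fin n) (Fin n ⊕ Fin n) A) *
          (fromBlocks 0 (-((↑u⁻¹ : A) • 1)) ((↑u : A) • 1) 0 :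
            Matrix (Fin n ⊕ Fin n) (Fin n ⊕ Fin n) A) ∧
      ∃ e ∈ gradedElementary 𝒜 (Fin n ⊕ Fin n) (Sum.elim α fun i => lam + α i),
        e.val = fromBlocks (h.val) 0 0 (((↑u : A) • 1) * (h⁻¹).val * ((↑u⁻¹ : A) • 1)) := by
  set s : Matrix (Fin n) (Fin n) A := (u : A) • 1
  set s' : Matrix (Fin n) (Fin n) A := (↑u⁻¹ : A) • 1
  have hss' : s * s' = 1 := by simp [s, s', smul_smul]
  have hs's : s' * s = 1 := by simp [s, s', smul_smul]
  have hs_deg : s.IsGraded 𝒜 (fun i => lam + α i) α := isGraded_smul_one hu fun i => by abel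
  have hs'_deg : s'.IsGraded 𝒜 α (fun i => lam + α i) :=
    isGraded_smul_one (u.val_inv_mem_graded 𝒜 hu) fun i => by abel
  have hXY : (h.val * s') * (s * (h⁻¹).val) = 1 := by
    simp [Matrix.mul_assoc, ← Matrix.mul_assoc s', hs's]
  have hYX : (s * (h⁻¹).val) * (h.val * s') = 1 := by
    simp [Matrix.mul_assoc, ← Matrix.mul_assoc (h⁻¹).val, hss']
  have hdiag := fromBlocks_diag_eq_antidiag_mul_antidiag (g := h.val) (g' := (h⁻¹).val) hs's
  refine ⟨by rw [hdiag, fromBlocks_antidiag_eq_mul hXY hYX], ?_⟩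
  have hw : fromBlocks 0 (-s') s 0 ∈
      gradedElementaryMatrices 𝒜 (Sum.elim α fun i => lam + α i) := by
    simpa using fromBlocks_antidiag_mem_gradedElementaryMatrices (X := -s') (Y := -s)
      (by simp [hs's]) (by simp [hss']) hs'_deg.neg hs_deg.neg
  rw [hdiag]
  exact mem_gradedElementaryMatrices.mp <| mul_mem
    (fromBlocks_antidiag_mem_gradedElementaryMatrices hXY hYX
      (IsGraded.mul (show h.val.IsGraded 𝒜 α α from hh) hs'_deg) (hs_deg.mul hh')) hw
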